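/- arXiv:1906.02895 — 2 statements merged into one kernel-verified Lean document; each statement's English description precedes it below -/
import Mathlib

section
/- Define the relation ≡_G on V(G) by x ≡_G y iff ρ_G({x}) = ρ_G({y}) ≥ ρ_G({x,y}). Then ≡_G is an equivalence relation on V(G), and every equivalence class of ≡_G is the vertex set of an attached star in G, a clique of pairwise true twins, or an independent set of pairwise false twins. -/
/-!
Over GF(2), `ρ({x})` is `0` or `1` according as `x` is isolated or not, and `ρ({x, y}) ≤ 1`
exactly when the rows of `x` and `y` in the cut matrix of `{x, y}` are equal or one of them
vanishes, since two vectors over GF(2) are dependent only in these cases. Hence `x ≡_G y` holds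
iff `x` and `y` are equal or twins, or one of them is a leaf whose only neighbour is the other.
Transitivity of this relation is a short case analysis. A class containing a leaf together with
its neighbour `c` is an attached star centred at `c`; in any other class the vertices are
pairwise twins, and then adjacency between distinct vertices of the class is all or nothing.
-/

open scoped Classical

namespace AvgCutRank

variable {V : Type*} {W : Type*}

/-- Local complementation of `G` at a vertex `v`: complement the adjacency inside
the neighborhood of `v`. -/
def localComp (G : SimpleGraph V) (v : V) : SimpleGraph V where
  Adj x y := x ≠ y ∧ (G.Adj x y ↔ ¬(G.Adj v x ∧ G.Adj v y))
  symm := ⟨by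
    rintro x y ⟨hxy, h⟩
    refine ⟨hxy.symm, ?_⟩
    rw [G.adj_comm y x, and_comm]
    exact h⟩
  loopless := ⟨fun x h => h.1 rfl⟩

/-- Two graphs on the same vertex set are locally equivalent if one is obtained from
the other by a sequence of local complementations. -/
def LocallyEquivalent (G H : SimpleGraph V) : Prop :=
  Relation.ReflTransGen (fun A B => ∃ v, B = localComp A v) G H

/-- `H` is (isomorphic to) a vertex-minor of `G`: `H` is isomorphic to an induced
subgraph of a graph locally equivalent to `G`. -/
def IsVertexMinor (H : SimpleGraph W) (G : SimpleGraph V) : Prop :=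
  ∃ (G' : SimpleGraph V) (s : Set V), LocallyEquivalent G G' ∧ Nonempty (H ≃g G'.induce s)

/-- The cut-rank of a set `X` of vertices: the rank over GF(2) of the `X × Xᶜ`
adjacency submatrix. -/
noncomputable def cutRank [Fintype V] [DecidableEq V] (G : SimpleGraph V)
    (X : Finset V) : ℕ :=
  (Matrix.of fun (i : X) (j : (Xᶜ : Finset V)) =>
    if G.Adj i.1 j.1 then (1 : ZMod 2) else 0).rank

/-- The average cut-rank of a graph. -/
noncomputable def avgCutRank [Fintype V] [DecidableEq V] (G : SimpleGraph V) : ℝ :=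
  (∑ X : Finset V, (cutRank G X : ℝ)) / 2 ^ Fintype.card V

/-- The maximum cut-rank of a graph. -/
noncomputable def maxCutRank [Fintype V] [DecidableEq V] (G : SimpleGraph V) : ℕ :=
  Finset.univ.sup (cutRank G)

/-- `x` and `y` are equal or twins: they have the same neighbors outside `{x, y}`. -/
def TwinEq (G : SimpleGraph V) (x y : V) : Prop :=
  x = y ∨ ∀ z, z ≠ x → z ≠ y → (G.Adj x z ↔ G.Adj y z)

/-- `x` and `y` are twins. -/
def IsTwins (G : SimpleGraph V) (x y : V) : Prop :=
  x ≠ y ∧ ∀ z, z ≠ x → z ≠ y → (G.Adj x z ↔ G.Adj y z)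

/-- Neighborhood diversity: the number of twin classes. -/
noncomputable def nd [Fintype V] [DecidableEq V] (G : SimpleGraph V) : ℕ :=
  (Finset.univ.image fun x => Finset.univ.filter fun y => TwinEq G x y).card

/-- The minimum rank of a graph over a field `F`. -/
noncomputable def minRank (F : Type*) [Field F] [Fintype V] [DecidableEq V]
    (G : SimpleGraph V) : ℕ :=
  sInf { r : ℕ | ∃ A : Matrix V V F, A.IsSymm ∧
    (∀ i j, i ≠ j → (A i j ≠ 0 ↔ G.Adj i j)) ∧ A.rank = r }

/-- The clique delta-cover number: the minimum `t` such that the edge set of `G` is the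
symmetric difference of the edge sets of `t` complete graphs (given by their vertex sets). -/
noncomputable def cliqueDeltaCover [Fintype V] [DecidableEq V] (G : SimpleGraph V) : ℕ :=
  sInf { t : ℕ | ∃ S : Fin t → Finset V, ∀ x y : V, x ≠ y →
    (G.Adj x y ↔ Odd (Finset.univ.filter fun i => x ∈ S i ∧ y ∈ S i).card) }

/-- `C` is the vertex set of an attached star in `G`: the subgraph induced on `C` is a
star (with center `c`) all of whose noncentral vertices are leaves of `G`. -/
def IsAttachedStar (G : SimpleGraph V) (C : Set V) : Prop :=
  ∃ c ∈ C, (∃ x ∈ C, x ≠ c) ∧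
    ∀ x ∈ C, x ≠ c → G.Adj c x ∧ ∀ y, G.Adj x y → y = c

/-- Deletion of a vertex: the induced subgraph on the complement of `{v}`. -/
def deleteVert (G : SimpleGraph V) (v : V) : SimpleGraph {w : V // w ≠ v} :=
  SimpleGraph.comap Subtype.val G

/-- Deletion of a finite set of vertices. -/
def deleteVerts (G : SimpleGraph V) (T : Finset V) : SimpleGraph {w : V // w ∉ T} :=
  SimpleGraph.comap Subtype.val G

/-- The star `K_{1,m}` with center `0`. -/
def starGraph (m : ℕ) : SimpleGraph (Fin (m + 1)) :=
  SimpleGraph.fromRel fun x _ => x = 0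

/-- The disjoint union of three copies of `K₂`. -/
def threeK2 : SimpleGraph (Fin 6) :=
  SimpleGraph.fromRel fun x y =>
    (x = 0 ∧ y = 1) ∨ (x = 2 ∧ y = 3) ∨ (x = 4 ∧ y = 5)

/-- The disjoint union of two paths on three vertices. -/
def twoP3 : SimpleGraph (Fin 6) :=
  SimpleGraph.fromRel fun x y =>
    (x = 0 ∧ y = 1) ∨ (x = 1 ∧ y = 2) ∨ (x = 3 ∧ y = 4) ∨ (x = 4 ∧ y = 5)

/-- The disjoint union of `K₂` and the star `K_{1,k+1}`. -/
def K2PlusStar (k : ℕ) : SimpleGraph (Fin (k + 4)) :=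
  SimpleGraph.fromRel fun x y => (x.val = 0 ∧ y.val = 1) ∨ (x.val = 2 ∧ 3 ≤ y.val)

/-- `E_k`: the star `K_{1,k+1}` with one edge subdivided. Vertex `0` is the center,
`1` is the subdivision vertex, `2` is the leaf behind it, `3, …, k+2` are leaves. -/
def Egraph (k : ℕ) : SimpleGraph (Fin (k + 3)) :=
  SimpleGraph.fromRel fun x y =>
    (x.val = 0 ∧ y.val = 1) ∨ (x.val = 1 ∧ y.val = 2) ∨ (x.val = 0 ∧ 3 ≤ y.val)

/-- Finite graphs represented on the vertex sets `Fin n`. -/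
abbrev GraphOn := Σ n : ℕ, SimpleGraph (Fin n)

/-- `H` is isomorphic to an induced subgraph of `G`. -/
def IsIndSubgraph (H G : GraphOn) : Prop :=
  ∃ s : Set (Fin G.1), Nonempty (H.2 ≃g G.2.induce s)

/-- The sequence `x_n(ε)` from the paper. -/
noncomputable def xseq (ε : ℝ) : ℕ → ℤ
  | 0 => max ⌊2 - Real.logb 2 (1 - ε)⌋ 5
  | n + 1 => 2 ^ (8 * (n + 1) + 10) *
      ⌊(xseq ε n : ℝ) - Real.logb 2 (1 - Int.fract ((2 : ℝ) ^ (xseq ε n) * ε / 2)) + 1⌋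


open Module Submodule

section ZModTwo

variable {M : Type*} [AddCommGroup M] [Module (ZMod 2) M]

theorem add_eq_zero_iff_eq_of_zmod_two {u v : M} : u + v = 0 ↔ u = v := by
  have hv : -v = v := neg_eq_of_add_eq_zero_left <| by
    rw [← two_smul (ZMod 2), show (2 : ZMod 2) = 0 from rfl, zero_smul]
  rw [add_eq_zero_iff_eq_neg, hv]

theorem linearIndependent_pair_zmod_two_iff {u v : M} :
    LinearIndependent (ZMod 2) ![u, v] ↔ u ≠ 0 ∧ v ≠ 0 ∧ u ≠ v := by
  rw [LinearIndependent.pair_iff]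
  refine ⟨fun h => ⟨fun hu => ?_, fun hv => ?_, fun huv => ?_⟩, ?_⟩
  · simpa using h 1 0 (by simp [hu])
  · simpa using h 0 1 (by simp [hv])
  · simpa using h 1 1 (by simp [add_eq_zero_iff_eq_of_zmod_two, huv])
  · rintro ⟨hu, hv, huv⟩ s t hst
    have h01 : ∀ r : ZMod 2, r = 0 ∨ r = 1 := by decide
    rcases h01 s with rfl | rfl <;> rcases h01 t with rfl | rfl <;>
      simp_all [add_eq_zero_iff_eq_of_zmod_two]

theorem finrank_span_pair_le_one_iff [Module.Finite (ZMod 2) M] {u v : M} :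
    finrank (ZMod 2) (span (ZMod 2) {u, v}) ≤ 1 ↔ u = 0 ∨ v = 0 ∨ u = v := by
  constructor
  · intro h
    by_contra! huv
    have h2 := finrank_span_eq_card (linearIndependent_pair_zmod_two_iff.mpr huv)
    rw [Matrix.range_cons_cons_empty] at h2
    simp [h2] at h
  · have hle : ∀ w : M, finrank (ZMod 2) (span (ZMod 2) {w}) ≤ 1 := fun w =>
      (finrank_span_le_card {w}).trans (by simp)
    rintro (rfl | rfl | rfl)
    · rw [span_insert_zero]; exact hle v
    · rw [Set.pair_comm, span_insert_zero]; exact hle u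
    · rw [Set.pair_eq_singleton]; exact hle u

end ZModTwo

section TwinOrPendant

variable {G : SimpleGraph V} {x y z : V}

theorem neighborSet_eq_singleton_iff :
    G.neighborSet x = {y} ↔ G.Adj x y ∧ ∀ z, G.Adj x z → z = y :=
  Set.eq_singleton_iff_unique_mem

theorem adj_of_neighborSet_eq_singleton (h : G.neighborSet x = {y}) : G.Adj x y :=
  (neighborSet_eq_singleton_iff.mp h).1

theorem eq_of_adj_of_neighborSet_eq_singleton (h : G.neighborSet x = {y}) (hz : G.Adj x z) :
    z = y :=
  (neighborSet_eq_singleton_iff.mp h).2 z hz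

theorem neighborSet_eq_singleton_iff_of_not_isolated (hx : ¬∀ z, ¬G.Adj x z) :
    G.neighborSet x = {y} ↔ ∀ z, z ≠ y → ¬G.Adj x z := by
  refine ⟨fun h z hzy hz => hzy (eq_of_adj_of_neighborSet_eq_singleton h hz), fun h => ?_⟩
  push Not at hx
  obtain ⟨w, hw⟩ := hx
  obtain rfl : w = y := by_contra fun hwy => h w hwy hw
  exact neighborSet_eq_singleton_iff.mpr ⟨hw, fun z hz => by_contra fun hzw => h z hzw hz⟩

theorem TwinEq.refl (G : SimpleGraph V) (x : V) : TwinEq G x x := .inl rfl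

theorem twinEq_iff_of_ne (hxy : x ≠ y) :
    TwinEq G x y ↔ ∀ z, z ≠ x → z ≠ y → (G.Adj x z ↔ G.Adj y z) :=
  or_iff_right hxy

theorem twinEq_of_neighborSet_eq (h : G.neighborSet x = G.neighborSet y) : TwinEq G x y :=
  .inr fun z _ _ => Set.ext_iff.mp h z

theorem TwinEq.symm (h : TwinEq G x y) : TwinEq G y x := by
  rcases h with rfl | h
  · exact .refl G x
  · exact .inr fun z hzy hzx => (h z hzx hzy).symm

theorem TwinEq.isTwins (h : TwinEq G x y) (hxy : x ≠ y) : IsTwins G x y :=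
  ⟨hxy, h.resolve_left hxy⟩

theorem TwinEq.adj_iff (h : TwinEq G x y) (hzx : z ≠ x) (hzy : z ≠ y) :
    G.Adj z x ↔ G.Adj z y := by
  rcases h with rfl | h
  · rfl
  · simpa only [G.adj_comm z] using h z hzx hzy

theorem TwinEq.trans (hxy : TwinEq G x y) (hyz : TwinEq G y z) : TwinEq G x z := by
  rcases eq_or_ne x y with rfl | hxy'
  · exact hyz
  rcases eq_or_ne y z with rfl | hyz'
  · exact hxy
  rcases eq_or_ne x z with rfl | hxz
  · exact .refl G x
  refine .inr fun w hwx hwz => ?_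
  rcases eq_or_ne w y with rfl | hwy
  · rw [hyz.adj_iff hxy' hxz, G.adj_comm, hxy.adj_iff hxz.symm hyz'.symm]
  · simpa only [G.adj_comm w] using (hxy.adj_iff hwx hwy).trans (hyz.adj_iff hwy hwz)

theorem TwinEq.forall_not_adj (h : TwinEq G x y) (hx : ∀ z, ¬G.Adj x z) : ∀ z, ¬G.Adj y z := by
  intro z hz
  rcases eq_or_ne z x with rfl | hzx
  · exact hx y hz.symm
  · exact hx z ((h.adj_iff hzx hz.ne').mpr hz.symm).symm

theorem TwinEq.neighborSet_eq_singleton (h : TwinEq G x y) (hy : G.neighborSet y = {z})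
    (hxz : x ≠ z) : G.neighborSet x = {z} := by
  rcases eq_or_ne x y with rfl | hxy
  · exact hy
  have hyz := adj_of_neighborSet_eq_singleton hy
  refine neighborSet_eq_singleton_iff.mpr ⟨((h.adj_iff hxz.symm hyz.ne').mpr hyz.symm).symm,
    fun w hw => ?_⟩
  rcases eq_or_ne w y with rfl | hwy
  · exact absurd (eq_of_adj_of_neighborSet_eq_singleton hy hw.symm) hxz
  · exact eq_of_adj_of_neighborSet_eq_singleton hy ((h.adj_iff hw.ne' hwy).mp hw.symm).symm

theorem TwinEq.eq_of_neighborSet_eq_singleton (h : TwinEq G x y) (hz : G.neighborSet z = {y})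
    (hxz : x ≠ z) : x = y := by
  have hzy := adj_of_neighborSet_eq_singleton hz
  exact eq_of_adj_of_neighborSet_eq_singleton hz ((h.adj_iff hxz.symm hzy.ne).mpr hzy)

variable (G) in
def TwinOrPendant (x y : V) : Prop :=
  TwinEq G x y ∨ G.neighborSet x = {y} ∨ G.neighborSet y = {x}

theorem TwinOrPendant.symm (h : TwinOrPendant G x y) : TwinOrPendant G y x := by
  rcases h with hT | hP | hP'
  · exact .inl hT.symm
  · exact .inr (.inr hP)
  · exact .inr (.inl hP')

theorem TwinOrPendant.trans (hxy : TwinOrPendant G x y) (hyz : TwinOrPendant G y z) :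
    TwinOrPendant G x z := by
  rcases eq_or_ne x y with rfl | hxy'
  · exact hyz
  rcases eq_or_ne y z with rfl | hyz'
  · exact hxy
  rcases eq_or_ne x z with rfl | hxz
  · exact .inl (.refl G x)
  rcases hxy with hT | hP | hP' <;> rcases hyz with hT' | hQ | hQ'
  · exact .inl (hT.trans hT')
  · exact .inr (.inl (hT.neighborSet_eq_singleton hQ hxz))
  · exact absurd (hT.eq_of_neighborSet_eq_singleton hQ' hxz) hxy'
  · exact absurd (hT'.symm.eq_of_neighborSet_eq_singleton hP hxz.symm) hyz'.symm
  · exact absurd (eq_of_adj_of_neighborSet_eq_singleton hQ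
      (adj_of_neighborSet_eq_singleton hP).symm) hxz
  · exact .inl (twinEq_of_neighborSet_eq (hP.trans hQ'.symm))
  · exact .inr (.inr (hT'.symm.neighborSet_eq_singleton hP' hxz.symm))
  · exact absurd (Set.singleton_injective (hP'.symm.trans hQ)) hxz
  · exact absurd (eq_of_adj_of_neighborSet_eq_singleton hP'
      (adj_of_neighborSet_eq_singleton hQ').symm) hxz.symm

variable (G) in
theorem equivalence_twinOrPendant : Equivalence (TwinOrPendant G) :=
  ⟨fun x => .inl (.refl G x), TwinOrPendant.symm, TwinOrPendant.trans⟩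

theorem TwinOrPendant.neighborSet_eq_singleton (h : TwinOrPendant G x y)
    (hx : G.neighborSet x = {z}) (hyz : y ≠ z) : G.neighborSet y = {z} := by
  rcases h with hT | hP | hP'
  · exact hT.symm.neighborSet_eq_singleton hx hyz
  · exact absurd (Set.singleton_injective (hP.symm.trans hx)) hyz
  · exact absurd (eq_of_adj_of_neighborSet_eq_singleton hx
      (adj_of_neighborSet_eq_singleton hP').symm) hyz

theorem isAttachedStar_of_pairwise_twinOrPendant {C : Set V} (hC : C.Pairwise (TwinOrPendant G))
    {y c : V} (hy : y ∈ C) (hc : c ∈ C) (hyc : G.neighborSet y = {c}) : IsAttachedStar G C := by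
  refine ⟨c, hc, ⟨y, hy, (adj_of_neighborSet_eq_singleton hyc).ne⟩, fun w hw hwc => ?_⟩
  have hw : G.neighborSet w = {c} := by
    rcases eq_or_ne w y with rfl | hwy
    · exact hyc
    · exact (hC hy hw hwy.symm).neighborSet_eq_singleton hyc hwc
  exact ⟨(adj_of_neighborSet_eq_singleton hw).symm,
    fun u hu => eq_of_adj_of_neighborSet_eq_singleton hw hu⟩

theorem adj_iff_adj_of_pairwise_twinEq {C : Set V} (hC : C.Pairwise (TwinEq G)) {a b c d : V}
    (ha : a ∈ C) (hb : b ∈ C) (hc : c ∈ C) (hd : d ∈ C) (hab : a ≠ b) (hcd : c ≠ d) :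
    G.Adj a b ↔ G.Adj c d := by
  have move {p q r : V} (hq : q ∈ C) (hr : r ∈ C) (hpq : p ≠ q) (hpr : p ≠ r) :
      G.Adj p q ↔ G.Adj p r := by
    rcases eq_or_ne q r with rfl | hqr
    · rfl
    · exact (hC hq hr hqr).adj_iff hpq hpr
  rcases eq_or_ne a d with rfl | had
  · rw [move hb hc hab hcd.symm, G.adj_comm]
  · rw [move hb hd hab had, G.adj_comm, move ha hc had.symm hcd.symm, G.adj_comm]

theorem pairwise_twins_of_pairwise_twinEq {C : Set V} (hC : C.Pairwise (TwinEq G)) :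
    C.Pairwise (fun y z => G.Adj y z ∧ IsTwins G y z) ∨
      C.Pairwise (fun y z => ¬G.Adj y z ∧ IsTwins G y z) := by
  by_cases hadj : ∃ a ∈ C, ∃ b ∈ C, a ≠ b ∧ G.Adj a b
  · obtain ⟨a, ha, b, hb, hab, h⟩ := hadj
    exact .inl fun y hy z hz hyz =>
      ⟨(adj_iff_adj_of_pairwise_twinEq hC ha hb hy hz hab hyz).mp h, (hC hy hz hyz).isTwins hyz⟩
  · push Not at hadj
    exact .inr fun y hy z hz hyz => ⟨hadj y hy z hz hyz, (hC hy hz hyz).isTwins hyz⟩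

theorem isAttachedStar_or_pairwise_twins {C : Set V} (hC : C.Pairwise (TwinOrPendant G)) :
    IsAttachedStar G C ∨ C.Pairwise (fun y z => G.Adj y z ∧ IsTwins G y z) ∨
      C.Pairwise (fun y z => ¬G.Adj y z ∧ IsTwins G y z) := by
  by_cases hP : ∃ y ∈ C, ∃ c ∈ C, G.neighborSet y = {c}
  · obtain ⟨y, hy, c, hc, hyc⟩ := hP
    exact .inl (isAttachedStar_of_pairwise_twinOrPendant hC hy hc hyc)
  · push Not at hP
    refine .inr (pairwise_twins_of_pairwise_twinEq fun y hy z hz hyz => ?_)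
    exact (hC hy hz hyz).resolve_right (not_or.mpr ⟨hP y hy z hz, hP z hz y hy⟩)

end TwinOrPendant

section CutRank

variable [Fintype V] [DecidableEq V] (G : SimpleGraph V)

noncomputable def cutRow (X : Finset V) (v : V) : (Xᶜ : Finset V) → ZMod 2 :=
  fun j => if G.Adj v j then 1 else 0

variable {G}

theorem cutRow_eq_zero_iff {X : Finset V} {v : V} :
    cutRow G X v = 0 ↔ ∀ z ∉ X, ¬G.Adj v z := by
  simp [funext_iff, cutRow]

theorem cutRow_eq_cutRow_iff {X : Finset V} {v w : V} :
    cutRow G X v = cutRow G X w ↔ ∀ z ∉ X, (G.Adj v z ↔ G.Adj w z) := by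
  simp only [funext_iff, cutRow, Subtype.forall, Finset.mem_compl]
  refine forall₂_congr fun z _ => ?_
  split_ifs <;> simp_all

theorem cutRank_eq_finrank_span_cutRow (X : Finset V) :
    cutRank G X = finrank (ZMod 2) (span (ZMod 2) (cutRow G X '' X)) := by
  rw [cutRank, Matrix.rank_eq_finrank_span_row, Set.image_eq_range]
  rfl

theorem cutRank_eq_zero_iff {X : Finset V} :
    cutRank G X = 0 ↔ ∀ v ∈ X, ∀ z ∉ X, ¬G.Adj v z := by
  rw [cutRank_eq_finrank_span_cutRow, Submodule.finrank_eq_zero, span_eq_bot,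
    Set.forall_mem_image]
  simp only [Finset.mem_coe, cutRow_eq_zero_iff]

theorem cutRank_singleton_eq_zero_iff {x : V} :
    cutRank G {x} = 0 ↔ ∀ z, ¬G.Adj x z := by
  rw [cutRank_eq_zero_iff]
  refine ⟨fun h z hz => h x (Finset.mem_singleton_self x) z (by simpa using hz.ne') hz, ?_⟩
  simp +contextual

theorem cutRank_singleton_le_one (x : V) : cutRank G {x} ≤ 1 := by
  rw [cutRank_eq_finrank_span_cutRow, Finset.coe_singleton, Set.image_singleton]
  exact (finrank_span_le_card _).trans (by simp)

theorem cutRank_pair_le_one_iff {x y : V} :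
    cutRank G {x, y} ≤ 1 ↔ (∀ z, z ≠ x → z ≠ y → (G.Adj x z ↔ G.Adj y z)) ∨
      (∀ z, z ≠ y → ¬G.Adj x z) ∨ (∀ z, z ≠ x → ¬G.Adj y z) := by
  rw [cutRank_eq_finrank_span_cutRow, Finset.coe_pair, Set.image_pair,
    finrank_span_pair_le_one_iff, cutRow_eq_zero_iff, cutRow_eq_zero_iff,
    cutRow_eq_cutRow_iff, ← or_rotate]
  simp only [Finset.mem_insert, Finset.mem_singleton, not_or, and_imp]
  refine or_congr Iff.rfl (or_congr ?_ ?_)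
  · exact ⟨fun h z hzy hz => h z hz.ne' hzy hz, fun h z _ hzy => h z hzy⟩
  · exact ⟨fun h z hzx hz => h z hzx hz.ne' hz, fun h z hzx _ => h z hzx⟩

theorem cutRank_singleton_eq_one {x : V} (hx : ¬∀ z, ¬G.Adj x z) : cutRank G {x} = 1 := by
  have := cutRank_singleton_le_one (G := G) x
  have := mt cutRank_singleton_eq_zero_iff.mp hx
  omega

theorem cutRank_equiv_iff_twinOrPendant {x y : V} :
    (cutRank G {x} = cutRank G {y} ∧ cutRank G {x, y} ≤ cutRank G {y}) ↔
      TwinOrPendant G x y := by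
  rcases eq_or_ne x y with rfl | hxy
  · exact iff_of_true ⟨rfl, by simp⟩ (.inl (.refl G x))
  by_cases hx : ∀ z, ¬G.Adj x z <;> by_cases hy : ∀ z, ¬G.Adj y z
  · refine iff_of_true ⟨?_, ?_⟩ (.inl (.inr fun z _ _ => iff_of_false (hx z) (hy z)))
    · rw [cutRank_singleton_eq_zero_iff.mpr hx, cutRank_singleton_eq_zero_iff.mpr hy]
    · refine (cutRank_eq_zero_iff.mpr ?_).trans_le (Nat.zero_le _)
      simp only [Finset.mem_insert, Finset.mem_singleton]
      rintro v (rfl | rfl) z -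
      exacts [hx z, hy z]
  · refine iff_of_false (fun h => ?_) ?_
    · rw [cutRank_singleton_eq_zero_iff.mpr hx, cutRank_singleton_eq_one hy] at h
      exact zero_ne_one h.1
    · rintro (hT | hP | hP')
      · exact hy (hT.forall_not_adj hx)
      · exact hx y (adj_of_neighborSet_eq_singleton hP)
      · exact hx y (adj_of_neighborSet_eq_singleton hP').symm
  · refine iff_of_false (fun h => ?_) ?_
    · rw [cutRank_singleton_eq_one hx, cutRank_singleton_eq_zero_iff.mpr hy] at h
      exact one_ne_zero h.1
    · rintro (hT | hP | hP')
      · exact hx (hT.symm.forall_not_adj hy)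
      · exact hy x (adj_of_neighborSet_eq_singleton hP).symm
      · exact hy x (adj_of_neighborSet_eq_singleton hP')
  · rw [cutRank_singleton_eq_one hx, cutRank_singleton_eq_one hy, cutRank_pair_le_one_iff,
      TwinOrPendant, twinEq_iff_of_ne hxy, neighborSet_eq_singleton_iff_of_not_isolated hx,
      neighborSet_eq_singleton_iff_of_not_isolated hy]
    exact and_iff_right rfl

end CutRank

/-- The relation `x ≡_G y ↔ ρ({x}) = ρ({y}) ≥ ρ({x,y})` is an
equivalence relation, and each of its classes is the vertex set of an attached star,
a clique of pairwise true twins, or an independent set of pairwise false twins. -/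
theorem stmt8 {V : Type} [Fintype V] [DecidableEq V] (G : SimpleGraph V) :
    Equivalence (fun x y : V =>
      cutRank G {x} = cutRank G {y} ∧ cutRank G {x, y} ≤ cutRank G {y}) ∧
    ∀ x : V, ∀ C : Set V,
      C = { y | cutRank G {x} = cutRank G {y} ∧ cutRank G {x, y} ≤ cutRank G {y} } →
      (IsAttachedStar G C ∨
       (∀ y ∈ C, ∀ z ∈ C, y ≠ z → G.Adj y z ∧ IsTwins G y z) ∨
       (∀ y ∈ C, ∀ z ∈ C, y ≠ z → ¬G.Adj y z ∧ IsTwins G y z)) := by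
  have hrel : (fun x y : V => cutRank G {x} = cutRank G {y} ∧ cutRank G {x, y} ≤ cutRank G {y}) =
      TwinOrPendant G := by
    ext x y
    exact cutRank_equiv_iff_twinOrPendant
  refine ⟨hrel ▸ equivalence_twinOrPendant G, fun x C hC => isAttachedStar_or_pairwise_twins ?_⟩
  subst hC
  intro y hy z hz _
  exact (cutRank_equiv_iff_twinOrPendant.mp hy).symm.trans (cutRank_equiv_iff_twinOrPendant.mp hz)

end AvgCutRank
end

section
/- Let k ≥ 0 be an integer and let G be a finite simple graph such that maxρ(G) > k and maxρ(G − v) ≤ k for every vertex v of G. Then |V(G)| = 2k + 2. -/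
/-!
Take `X` with `ρ(X) > k` and let `M` be the `X × Xᶜ` matrix defining `ρ(X)`. Deleting the row
of `v ∈ X` leaves a submatrix of the matrix of `G - v` at `X ∖ {v}`, of rank at most
`k < rank M`. So no row of `M` lies in the span of the others: the rows are independent,
`|X| = rank M`, and the deleted matrix has rank `|X| - 1 ≤ k`. Hence `|X| = k + 1`, and since
`ρ(Xᶜ) = ρ(X)` by symmetry of the adjacency relation, also `|Xᶜ| = k + 1`.
-/

open scoped Classical

namespace Matrix

variable {K : Type*} [Field K] {m n : Type*} [Fintype m] [Fintype n]

theorem linearIndependent_row_of_forall_rank_deleteRow_lt (A : Matrix m n K)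
    (h : ∀ i₀, (A.submatrix (Subtype.val : {i // i ≠ i₀} → m) id).rank < A.rank) :
    LinearIndependent K A.row := by
  rw [linearIndependent_iff_notMem_span]
  intro i hi
  have hrange : Set.range (A.submatrix (Subtype.val : {i' // i' ≠ i} → m) id).row =
      A.row '' (Set.univ \ {i}) := by
    rw [← Set.compl_eq_univ_sdiff, Set.image_eq_range]
    rfl
  have hspan : Submodule.span K (Set.range A.row) =
      Submodule.span K (A.row '' (Set.univ \ {i})) := by
    rw [← Submodule.span_insert_eq_span hi, ← Set.image_insert_eq, Set.insert_sdiff_singleton,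
      Set.insert_eq_of_mem (Set.mem_univ i), Set.image_univ]
  apply (h i).ne
  rw [rank_eq_finrank_span_row, rank_eq_finrank_span_row, hrange, hspan]

theorem card_height_eq_of_forall_rank_deleteRow_le (A : Matrix m n K) {k : ℕ} (hA : k < A.rank)
    (h : ∀ i₀, (A.submatrix (Subtype.val : {i // i ≠ i₀} → m) id).rank ≤ k) :
    Fintype.card m = k + 1 := by
  have hli := A.linearIndependent_row_of_forall_rank_deleteRow_lt fun i₀ => (h i₀).trans_lt hA
  have hcard : k < Fintype.card m := hli.rank_matrix ▸ hA
  obtain ⟨i₀⟩ : Nonempty m := Fintype.card_pos_iff.mp (by omega)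
  have hdel : (A.submatrix (Subtype.val : {i // i ≠ i₀} → m) id).rank = Fintype.card m - 1 :=
    (hli.comp _ Subtype.val_injective).rank_matrix.trans <| by
      rw [Fintype.card_subtype_compl, Fintype.card_subtype_eq]
  have := h i₀
  omega

end Matrix

namespace AvgCutRank

variable {V : Type*} [Fintype V] [DecidableEq V]

noncomputable def cutMatrix (G : SimpleGraph V) (X : Finset V) : Matrix X (Xᶜ : Finset V) (ZMod 2) :=
  Matrix.of fun i j => if G.Adj i.1 j.1 then 1 else 0

theorem cutRank_eq_rank_cutMatrix (G : SimpleGraph V) (X : Finset V) :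
    cutRank G X = (cutMatrix G X).rank :=
  rfl

theorem cutRank_compl (G : SimpleGraph V) (X : Finset V) : cutRank G Xᶜ = cutRank G X := by
  have h : cutMatrix G Xᶜ = (cutMatrix G X).transpose.submatrix (Equiv.refl _)
      (Equiv.subtypeEquivRight fun v => by rw [compl_compl]) := by
    ext i j
    simp [cutMatrix, G.adj_comm]
  rw [cutRank_eq_rank_cutMatrix, cutRank_eq_rank_cutMatrix, h, Matrix.rank_submatrix,
    Matrix.rank_transpose]

theorem rank_cutMatrix_deleteRow_le (G : SimpleGraph V) {X : Finset V} {v : V} (hv : v ∈ X) :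
    ((cutMatrix G X).submatrix (Subtype.val : {i // i ≠ ⟨v, hv⟩} → X) id).rank ≤
      cutRank (deleteVert G v) (X.subtype (· ≠ v)) := by
  let r : {i // i ≠ (⟨v, hv⟩ : X)} → X.subtype (· ≠ v) := fun i =>
    ⟨⟨i.1, fun h => i.2 (Subtype.ext h)⟩, Finset.mem_subtype.mpr i.1.2⟩
  let c : (Xᶜ : Finset V) → ((X.subtype (· ≠ v))ᶜ : Finset _) := fun j =>
    have hj : j.1 ∉ X := Finset.mem_compl.mp j.2
    ⟨⟨j, fun h => hj (h ▸ hv)⟩, by simpa using hj⟩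
  exact Matrix.rank_submatrix_le (cutMatrix (deleteVert G v) (X.subtype (· ≠ v))) r c

theorem card_eq_of_cutRank_gt (G : SimpleGraph V) {k : ℕ} {X : Finset V} (hX : k < cutRank G X)
    (hdel : ∀ v : V, maxCutRank (deleteVert G v) ≤ k) : X.card = k + 1 := by
  rw [← Fintype.card_coe]
  refine (cutMatrix G X).card_height_eq_of_forall_rank_deleteRow_le hX fun i₀ => ?_
  calc _ ≤ cutRank (deleteVert G i₀) (X.subtype (· ≠ i₀.1)) := rank_cutMatrix_deleteRow_le G i₀.2
    _ ≤ maxCutRank (deleteVert G i₀) := Finset.le_sup (Finset.mem_univ _)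
    _ ≤ k := hdel i₀

/-- If `maxρ(G) > k` and `maxρ(G − v) ≤ k` for every vertex `v`,
then `|V(G)| = 2k + 2`. -/
theorem stmt18 {V : Type} [Fintype V] [DecidableEq V] (G : SimpleGraph V) (k : ℕ)
    (h1 : k < maxCutRank G) (h2 : ∀ v : V, maxCutRank (deleteVert G v) ≤ k) :
    Fintype.card V = 2 * k + 2 := by
  obtain ⟨X, -, hX⟩ := Finset.lt_sup_iff.mp h1
  have hcard := card_eq_of_cutRank_gt G hX h2
  have hcard_compl := card_eq_of_cutRank_gt G ((cutRank_compl G X).symm ▸ hX) h2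
  rw [← X.card_add_card_compl, hcard, hcard_compl]
  ring

end AvgCutRank
end
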